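/- arXiv:2510.15287 — 6 statements merged into one kernel-verified Lean document; each statement's English description precedes it below -/
import Mathlib

section
/- Second-order truncation error of the discrete Dyson series: let U_n be the sum over all (j_1,...,j_n) ∈ {0,1,2}^n of products of factors e^{-iH_0Δt/2} ((-iΔt W)^{j_k}/j_k!) e^{-iH_0Δt/2}, and let Û_n be the same sum restricted to tuples containing at most one index equal to 2. If H_0 is Hermitian and W is bounded, then ‖U_n − Û_n‖ ≤ (1+‖W‖Δt)^{n-1} · [ (1+‖W‖Δt+‖W‖²Δt²/2)^n/(1+‖W‖Δt)^{n-1} − (n/2)‖W‖²Δt² − ‖W‖Δt − 1 ]; in particular, with T = nΔt fixed, ‖U_n − Û_n‖ ≤ C Δt² for a constant C depending only on T and ‖W‖. -/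
/-!
Conjugation by the unitary `exp (-i Δt/2 • H₀)` preserves norms, so the factor with index `r`
has norm at most `c r = x ^ r / r!`, where `x = ‖W‖ Δt`. Bounding `U - Û` termwise leaves the sum
of `∏ k, c (j k)` over the tuples with at least two entries `2`: the full sum `(c 0 + c 1 + c 2) ^ n`
minus the tuples without a `2`, `(c 0 + c 1) ^ n`, and those with exactly one,
`n c 2 (c 0 + c 1) ^ (n - 1)`.
-/

open Finset

section TupleSums

variable {ι : Type*} [Fintype ι]

theorem Fintype.sum_fun_fin_succ {M : Type*} [AddCommMonoid M] {n : ℕ}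
    (G : (Fin (n + 1) → ι) → M) :
    ∑ j, G j = ∑ i, ∑ j : Fin n → ι, G (Fin.cons i j) := by
  rw [← (Fin.consEquiv fun _ => ι).sum_comp G, Fintype.sum_prod_type]
  rfl

variable [DecidableEq ι] {R : Type*} (a : ι) (c : ι → R)

theorem sum_ite_card_filter_succ [CommSemiring R] (P : ℕ → Prop) [DecidablePred P]
    (n : ℕ) :
    ∑ j : Fin (n + 1) → ι, (if P #{k | j k = a} then ∏ k, c (j k) else 0) =
      c a * ∑ j : Fin n → ι, (if P (#{k | j k = a} + 1) then ∏ k, c (j k) else 0) +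
        (∑ i ∈ univ.erase a, c i) *
          ∑ j : Fin n → ι, (if P #{k | j k = a} then ∏ k, c (j k) else 0) := by
  rw [Fintype.sum_fun_fin_succ, ← add_sum_erase _ _ (mem_univ a), sum_mul]
  simp only [Fin.card_filter_univ_succ', Fin.cons_zero, Fin.cons_succ, Fin.prod_univ_succ,
    mul_sum, mul_ite, mul_zero]
  congr 1
  · simp only [if_pos, add_comm 1]
  · refine sum_congr rfl fun i hi => ?_
    simp only [if_neg (ne_of_mem_erase hi), zero_add]

theorem sum_ite_card_filter_eq_zero [CommSemiring R] (n : ℕ) :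
    ∑ j : Fin n → ι, (if #{k | j k = a} = 0 then ∏ k, c (j k) else 0) =
      (∑ i ∈ univ.erase a, c i) ^ n := by
  induction n with
  | zero => simp
  | succ n ih =>
    rw [sum_ite_card_filter_succ a c (· = 0)]
    simp only [Nat.add_one_ne_zero, if_false, sum_const_zero, mul_zero, zero_add, ih, pow_succ']

theorem sum_ite_card_filter_le_one [CommSemiring R] (n : ℕ) :
    ∑ j : Fin n → ι, (if #{k | j k = a} ≤ 1 then ∏ k, c (j k) else 0) =
      (∑ i ∈ univ.erase a, c i) ^ n + n * c a * (∑ i ∈ univ.erase a, c i) ^ (n - 1) := by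
  induction n with
  | zero => simp
  | succ n ih =>
    rw [sum_ite_card_filter_succ a c (· ≤ 1)]
    simp only [add_le_iff_nonpos_left, nonpos_iff_eq_zero, sum_ite_card_filter_eq_zero, ih]
    cases n with
    | zero => simp [add_comm]
    | succ n => push_cast [Nat.add_sub_cancel]; ring

theorem sum_prod_filter_not_card_filter_le_one [CommRing R] (n : ℕ) :
    ∑ j ∈ univ.filter (fun j : Fin n → ι => ¬ #{k | j k = a} ≤ 1), ∏ k, c (j k) =
      (∑ i, c i) ^ n -
        ((∑ i ∈ univ.erase a, c i) ^ n + n * c a * (∑ i ∈ univ.erase a, c i) ^ (n - 1)) := by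
  rw [eq_sub_iff_add_eq', Fintype.sum_pow, ← sum_ite_card_filter_le_one, ← sum_filter,
    sum_filter_add_sum_filter_not]

end TupleSums

theorem norm_pow_le_of_norm_one_le {α : Type*} [SeminormedRing α] (h : ‖(1 : α)‖ ≤ 1) (x : α) :
    ∀ n : ℕ, ‖x ^ n‖ ≤ ‖x‖ ^ n
  | 0 => by simpa using h
  | n + 1 => norm_pow_le' x n.succ_pos

theorem List.norm_prod_reverse_ofFn_le {α : Type*} [SeminormedRing α] {n : ℕ} (hn : n ≠ 0)
    (f : Fin n → α) : ‖(List.ofFn f).reverse.prod‖ ≤ ∏ k, ‖f k‖ := by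
  refine (List.norm_prod_le' (by simpa using hn)).trans_eq ?_
  rw [List.map_reverse, List.prod_reverse, List.map_ofFn, List.prod_ofFn]
  rfl

theorem CStarRing.norm_one_le {A : Type*} [NormedRing A] [StarRing A] [CStarRing A] :
    ‖(1 : A)‖ ≤ 1 := by
  have h := CStarRing.norm_star_mul_self (x := (1 : A))
  rw [star_one, one_mul] at h
  nlinarith [norm_nonneg (1 : A)]

section DysonFactors

open Complex

variable {A : Type*} [CStarAlgebra A]

theorem IsSelfAdjoint.exp_neg_I_mul_smul_mem_unitary {H : A} (hH : IsSelfAdjoint H) (s : ℝ) :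
    NormedSpace.exp ((-I * s) • H) ∈ unitary A := by
  have h_smul : (-I * s) • H = I • ((-s) • H) := by
    rw [← Complex.coe_smul, smul_smul, ofReal_neg, mul_neg, neg_mul]
  rw [h_smul]
  exact (selfAdjoint.expUnitary ⟨(-s) • H, (IsSelfAdjoint.all (-s)).smul hH⟩).2

theorem IsSelfAdjoint.norm_exp_mul_smul_pow_mul_exp_le {H : A} (hH : IsSelfAdjoint H) (W : A) {t : ℝ}
    (ht : 0 ≤ t) (r : ℕ) :
    ‖NormedSpace.exp ((-I * (t / 2 : ℝ)) • H) *
        (((-I * (t : ℝ)) ^ r / (r.factorial : ℂ)) • W ^ r) * NormedSpace.exp ((-I * (t / 2 : ℝ)) • H)‖ ≤ (‖W‖ * t) ^ r / r.factorial := by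
  have hu := hH.exp_neg_I_mul_smul_mem_unitary (t / 2)
  have h_coeff : ‖(-I * (t : ℝ)) ^ r / (r.factorial : ℂ)‖ = t ^ r / r.factorial := by
    rw [norm_div, norm_pow, norm_mul, norm_neg, norm_I, one_mul, norm_real,
      Real.norm_of_nonneg ht, norm_natCast]
  rw [CStarRing.norm_mul_mem_unitary _ hu, CStarRing.norm_mem_unitary_mul _ hu, norm_smul, h_coeff,
    mul_pow, mul_comm (‖W‖ ^ r), mul_div_right_comm]
  gcongr
  exact norm_pow_le_of_norm_one_le CStarRing.norm_one_le W r

end DysonFactors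

/-- Second-order truncation error of the discrete Dyson series: let `U_n` be the sum over
all `(j_1,…,j_n) ∈ {0,1,2}^n` of products of the factors
`e^{-iH₀Δt/2}·((-iΔt W)^{j_k}/j_k!)·e^{-iH₀Δt/2}` (multiplied in order of decreasing
index), and let `Û_n` be the same sum restricted to tuples with at most one index equal
to `2`. If `H₀` is Hermitian and `W` bounded, then
`‖U_n − Û_n‖ ≤ (1+‖W‖Δt)^{n-1}·[(1+‖W‖Δt+‖W‖²Δt²/2)^n/(1+‖W‖Δt)^{n-1} − (n/2)‖W‖²Δt² − ‖W‖Δt − 1]`. -/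
theorem second_order_dyson_truncation_error {E : Type*} [NormedAddCommGroup E]
    [InnerProductSpace ℂ E] [CompleteSpace E] (H₀ W : E →L[ℂ] E)
    (hH₀ : IsSelfAdjoint H₀) (n : ℕ) (hn : 1 ≤ n) (Δt : ℝ) (hΔt : 0 < Δt) :
    let F : ℕ → (E →L[ℂ] E) := fun r =>
      NormedSpace.exp ((-Complex.I * (Δt / 2 : ℝ)) • H₀) *
        (((-Complex.I * (Δt : ℝ)) ^ r / (r.factorial : ℂ)) • W ^ r) *
        NormedSpace.exp ((-Complex.I * (Δt / 2 : ℝ)) • H₀)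
    let U : E →L[ℂ] E :=
      ∑ j : Fin n → Fin 3, ((List.ofFn fun k : Fin n => F (j k)).reverse).prod
    let Uhat : E →L[ℂ] E :=
      ∑ j ∈ Finset.univ.filter
          (fun j : Fin n → Fin 3 =>
            (Finset.univ.filter (fun k : Fin n => j k = 2)).card ≤ 1),
        ((List.ofFn fun k : Fin n => F (j k)).reverse).prod
    ‖U - Uhat‖ ≤ (1 + ‖W‖ * Δt) ^ (n - 1) *
        ((1 + ‖W‖ * Δt + ‖W‖ ^ 2 * Δt ^ 2 / 2) ^ n / (1 + ‖W‖ * Δt) ^ (n - 1) -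
          (n / 2 : ℝ) * ‖W‖ ^ 2 * Δt ^ 2 - ‖W‖ * Δt - 1) := by
  intro F U Uhat
  set x := ‖W‖ * Δt
  let c : Fin 3 → ℝ := fun r => x ^ (r : ℕ) / (r : ℕ).factorial
  have h_term (j : Fin n → Fin 3) :
      ‖((List.ofFn fun k : Fin n => F (j k)).reverse).prod‖ ≤ ∏ k, c (j k) :=
    (List.norm_prod_reverse_ofFn_le (by omega) _).trans <| prod_le_prod (fun _ _ => norm_nonneg _)
      fun k _ => hH₀.norm_exp_mul_smul_pow_mul_exp_le W hΔt.le (j k)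
  have h_split : U - Uhat = ∑ j ∈ univ.filter (fun j : Fin n → Fin 3 => ¬ #{k | j k = 2} ≤ 1),
      ((List.ofFn fun k : Fin n => F (j k)).reverse).prod := by
    rw [sub_eq_iff_eq_add', sum_filter_add_sum_filter_not]
  have h_c2 : c 2 = ‖W‖ ^ 2 * Δt ^ 2 / 2 := by simp [c, x, mul_pow]
  have h_sum : ∑ i, c i = 1 + x + ‖W‖ ^ 2 * Δt ^ 2 / 2 := by
    simp [Fin.sum_univ_three, c, x, mul_pow]
  have h_sum_erase : ∑ i ∈ univ.erase 2, c i = 1 + x := by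
    rw [sum_erase_eq_sub (mem_univ _), h_sum, h_c2, add_sub_cancel_right]
  calc ‖U - Uhat‖ ≤ ∑ j ∈ univ.filter (fun j : Fin n → Fin 3 => ¬ #{k | j k = 2} ≤ 1),
        ∏ k, c (j k) := h_split ▸ norm_sum_le_of_le _ fun j _ => h_term j
    _ = (1 + x + ‖W‖ ^ 2 * Δt ^ 2 / 2) ^ n -
        ((1 + x) ^ n + n * (‖W‖ ^ 2 * Δt ^ 2 / 2) * (1 + x) ^ (n - 1)) := by
      rw [sum_prod_filter_not_card_filter_le_one, h_sum, h_sum_erase, h_c2]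
    _ = _ := by
      have hx : 1 + x ≠ 0 := by positivity
      rw [← pow_sub_one_mul (by omega : n ≠ 0) (1 + x)]
      field_simp
      ring
end

section
/- A priori bound on the reduced density matrix series: under the assumptions that ‖W_s‖ < ∞, ‖ρ_s(0)‖ < ∞, and |B(τ,τ')| ≤ B̄, the series ρ_s(t) = Σ_{m even} (over ordered time points −t < s_1 < ··· < s_m < t) of terms each bounded in norm by ‖ρ_s(0)‖·‖W_s‖^m·(m−1)!!·B̄^{m/2}·(2t)^m/m! converges absolutely, and ‖ρ_s(t)‖ ≤ ‖ρ_s(0)‖·exp(2t²‖W_s‖² B̄). -/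
/-!
The odd terms vanish, and after `(2k)! = 2^k k! (2k-1)‼` the bound on the `2k`-th term is
`ρ₀ x^k / k!` with `x = 2t²‖W_s‖²B̄`, the `k`-th term of `ρ₀ exp x`. Comparison with this
exponential series gives absolute convergence and the bound.
-/

open scoped Nat

theorem Nat.factorial_two_mul_eq_mul_doubleFactorial (k : ℕ) :
    (2 * k)! = 2 ^ k * k ! * (2 * k - 1)‼ := by
  cases k with
  | zero => rfl
  | succ k =>
    rw [show 2 * (k + 1) = 2 * k + 1 + 1 by ring, Nat.factorial_eq_mul_doubleFactorial,
      ← Nat.doubleFactorial_two_mul, Nat.add_sub_cancel]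
    ring_nf

theorem dyson_bound_two_mul (ρ0 w b t : ℝ) (k : ℕ) :
    ρ0 * w ^ (2 * k) * (((2 * k - 1)‼ : ℕ) : ℝ) * b ^ (2 * k / 2) * (2 * t) ^ (2 * k) /
      ((2 * k)! : ℝ) = ρ0 * ((2 * t ^ 2 * w ^ 2 * b) ^ k / k !) := by
  have hdouble : (0 : ℝ) < (2 * k - 1)‼ := by exact_mod_cast Nat.doubleFactorial_pos _
  rw [Nat.factorial_two_mul_eq_mul_doubleFactorial, Nat.mul_div_cancel_left k two_pos]
  push_cast
  field_simp
  ring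

theorem summable_and_norm_tsum_le_of_odd_eq_zero {E : Type*} [NormedAddCommGroup E]
    [CompleteSpace E] {f : ℕ → E} {g : ℕ → ℝ} {s : ℝ} (hg : HasSum g s)
    (heven : ∀ k, ‖f (2 * k)‖ ≤ g k) (hodd : ∀ k, f (2 * k + 1) = 0) :
    Summable f ∧ ‖∑' m, f m‖ ≤ s := by
  obtain ⟨a, ha⟩ := hg.summable.of_norm_bounded heven
  have hf : HasSum f a := by
    simpa using ha.even_add_odd (m' := 0) (by simp [hodd])
  exact ⟨hf.summable, hf.tsum_eq ▸ ha.norm_le_of_bounded hg heven⟩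

theorem reduced_density_matrix_a_priori_bound_general {A : Type*} [NormedAddCommGroup A]
    [CompleteSpace A] (t ρ0 Ws Bbar : ℝ) (term : ℕ → A)
    (hbound : ∀ m : ℕ, Even m →
      ‖term m‖ ≤ ρ0 * Ws ^ m * (((m - 1)‼ : ℕ) : ℝ) * Bbar ^ (m / 2) * (2 * t) ^ m /
        (m.factorial : ℝ))
    (hodd : ∀ m : ℕ, ¬ Even m → term m = 0) :
    Summable term ∧ ‖∑' m : ℕ, term m‖ ≤ ρ0 * Real.exp (2 * t ^ 2 * Ws ^ 2 * Bbar) := by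
  have hexp := (NormedSpace.expSeries_div_hasSum_exp (2 * t ^ 2 * Ws ^ 2 * Bbar)).mul_left ρ0
  rw [← Real.exp_eq_exp_ℝ] at hexp
  refine summable_and_norm_tsum_le_of_odd_eq_zero hexp (fun k => ?_)
    (fun k => hodd _ (Nat.not_even_two_mul_add_one k))
  rw [← dyson_bound_two_mul]
  exact hbound _ (even_two_mul k)

/-- A priori bound on the reduced density matrix series: if the `m`-th term of the Dyson
series is bounded in norm by `‖ρ_s(0)‖·‖W_s‖^m·(m−1)!!·B̄^{m/2}·(2t)^m/m!` for even `m` and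
vanishes for odd `m`, then the series converges absolutely and
`‖ρ_s(t)‖ ≤ ‖ρ_s(0)‖·exp(2t²‖W_s‖²B̄)`. -/
theorem reduced_density_matrix_a_priori_bound {A : Type*} [NormedAddCommGroup A]
    [CompleteSpace A] (t ρ0 Ws Bbar : ℝ) (ht : 0 ≤ t) (hρ0 : 0 ≤ ρ0) (hWs : 0 ≤ Ws)
    (hB : 0 ≤ Bbar) (term : ℕ → A)
    (hbound : ∀ m : ℕ, Even m →
      ‖term m‖ ≤ ρ0 * Ws ^ m * (((m - 1)‼ : ℕ) : ℝ) * Bbar ^ (m / 2) * (2 * t) ^ m /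
        (m.factorial : ℝ))
    (hodd : ∀ m : ℕ, ¬ Even m → term m = 0) :
    Summable term ∧ ‖∑' m : ℕ, term m‖ ≤ ρ0 * Real.exp (2 * t ^ 2 * Ws ^ 2 * Bbar) :=
  reduced_density_matrix_a_priori_bound_general t ρ0 Ws Bbar term hbound hodd
end

section
/- Binomial–double-factorial inequality: for positive integers n, N, N_2 with 2 ≤ N_2 ≤ N, 2N − 2N_2 ≥ 0 and N_2 ≥ 2N − 2n, it holds that (1/2^{N_2})·C(2n, N_2)·C(2n − N_2, 2N − 2N_2) ≤ C(2N, N_2)·(2n)^{2N − N_2}·N^{N_2}/(2N)!. -/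
/-!
Choosing the positions of the `N₂` twos and then of the `2N - 2N₂` ones is the same as choosing
the `K = 2N - N₂` occupied positions and then which of them hold twos:
`C(2n, N₂) C(2n - N₂, 2N - 2N₂) = C(2n, K) C(K, N₂)`. After multiplying by
`(2N)! = C(2N, N₂) N₂! K!`, the products `C(2n, K) K!` and `C(K, N₂) N₂!` are falling factorials,
hence at most `(2n)^K` and `K^N₂ ≤ (2N)^N₂ = 2^N₂ N^N₂`.
-/

open Nat

theorem Nat.choose_mul_factorial_le_pow (n k : ℕ) : n.choose k * k ! ≤ n ^ k := by
  rw [mul_comm, ← descFactorial_eq_factorial_mul_choose]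
  exact descFactorial_le_pow n k

theorem Nat.choose_mul_choose_sub_mul_factorial_le {a m s : ℕ} (hs : 2 * s ≤ m) :
    a.choose s * (a - s).choose (m - 2 * s) * m ! ≤ m.choose s * a ^ (m - s) * m ^ s := by
  set k := m - s
  have hsk : s ≤ k := by omega
  have hfact : m ! = m.choose s * s ! * k ! :=
    (choose_mul_factorial_mul_factorial (by omega)).symm
  have hsplit : a.choose s * (a - s).choose (m - 2 * s) = a.choose k * k.choose s := by
    rw [choose_mul hsk]
    congr 2
    omega
  calc a.choose s * (a - s).choose (m - 2 * s) * m !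
      = m.choose s * (a.choose k * k !) * (k.choose s * s !) := by rw [hsplit, hfact]; ring
    _ ≤ m.choose s * a ^ k * k ^ s := by gcongr <;> exact choose_mul_factorial_le_pow _ _
    _ ≤ m.choose s * a ^ k * m ^ s := by gcongr; omega

theorem binomial_double_factorial_inequality_general (n N N₂ : ℕ) (hN₂N : N₂ ≤ N) :
    ((Nat.choose (2 * n) N₂ : ℝ) * (Nat.choose (2 * n - N₂) (2 * N - 2 * N₂) : ℝ))
        / 2 ^ N₂
      ≤ (Nat.choose (2 * N) N₂ : ℝ) * (2 * n : ℝ) ^ (2 * N - N₂) * (N : ℝ) ^ N₂ /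
        ((2 * N).factorial : ℝ) := by
  have key : ((2 * n).choose N₂ * (2 * n - N₂).choose (2 * N - 2 * N₂) * (2 * N)! : ℝ)
      ≤ (2 * N).choose N₂ * (2 * n : ℝ) ^ (2 * N - N₂) * (2 * N : ℝ) ^ N₂ := by
    exact_mod_cast choose_mul_choose_sub_mul_factorial_le (a := 2 * n) (by omega : 2 * N₂ ≤ 2 * N)
  rw [div_le_div_iff₀ (by positivity) (by positivity)]
  exact key.trans_eq (by rw [mul_pow]; ring)

/-- Binomial–double-factorial inequality: for positive integers `n, N, N₂` with
`2 ≤ N₂ ≤ N` and `N₂ ≥ 2N − 2n`, it holds that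
`(1/2^{N₂})·C(2n,N₂)·C(2n−N₂, 2N−2N₂) ≤ C(2N,N₂)·(2n)^{2N−N₂}·N^{N₂}/(2N)!`. -/
theorem binomial_double_factorial_inequality (n N N₂ : ℕ) (hn : 0 < n) (hN : 0 < N)
    (hN₂ : 2 ≤ N₂) (hN₂N : N₂ ≤ N) (hlow : 2 * N ≤ 2 * n + N₂) :
    ((Nat.choose (2 * n) N₂ : ℝ) * (Nat.choose (2 * n - N₂) (2 * N - 2 * N₂) : ℝ))
        / 2 ^ N₂
      ≤ (Nat.choose (2 * N) N₂ : ℝ) * (2 * n : ℝ) ^ (2 * N - N₂) * (N : ℝ) ^ N₂ /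
        ((2 * N).factorial : ℝ) :=
  binomial_double_factorial_inequality_general n N N₂ hN₂N
end

section
/- Tail bound of type II: for positive integers n and real a := Δt‖W_s‖, B̄ ≥ 0, the sum Σ_{m=n+1}^{2n} C(2n+2m−1, 2n−1)·a^{2m}·(2m−1)!!·B̄^m is bounded by 36·Δt²·(nΔt)²·‖W_s‖⁴·B̄²·exp(18 n²Δt²‖W_s‖²B̄). -/
/-!
Since `C(2n+2m-1, 2n-1) (2m-1)‼ = (2n)(2n+1)⋯(2n+2m-1) / (2^m m!)` and every factor after the
first four is below `6n` (because `m ≤ 2n`), the `m`-th term is at most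
`36 n² x² y^(m-2) / (m-2)!` with `x = (Δt Ws)² B̄` and `y = 18 n² x`; summing, the exponential
series bounds the total by `36 n² x² exp y`.
-/

open scoped Nat

open Finset

theorem Nat.choose_add_two_mul_mul_doubleFactorial (N m : ℕ) :
    (N + 2 * m).choose N * (2 * m - 1)‼ * (2 ^ m * m !) = (N + 1).ascFactorial (2 * m) := by
  have two_mul_factorial : (2 * m)! = (2 * m - 1)‼ * (2 ^ m * m !) := by
    rcases m with _ | m
    · rfl
    · rw [← Nat.doubleFactorial_two_mul, show 2 * (m + 1) = 2 * m + 1 + 1 by ring,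
        Nat.factorial_eq_mul_doubleFactorial, Nat.add_sub_cancel, mul_comm]
  rw [Nat.ascFactorial_eq_factorial_mul_choose, Nat.choose_symm_add, two_mul_factorial]
  ring

theorem Nat.choose_mul_doubleFactorial_mul_factorial_le {n m : ℕ} (hnm : n + 1 ≤ m)
    (hmn : m ≤ 2 * n) :
    (2 * n + 2 * m - 1).choose (2 * n - 1) * (2 * m - 1)‼ * (m - 2)! ≤
      36 * n ^ 2 * (18 * n ^ 2) ^ (m - 2) := by
  obtain ⟨k, rfl⟩ : ∃ k, m = k + 2 := ⟨m - 2, by omega⟩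
  obtain ⟨N, rfl⟩ : ∃ N, n = N + 1 := ⟨n - 1, by omega⟩
  rw [Nat.add_sub_cancel]
  set c := (2 * (N + 1) + 2 * (k + 2) - 1).choose (2 * (N + 1) - 1) * (2 * (k + 2) - 1)‼
  have hc : c * k ! * (2 ^ (k + 2) * ((k + 2) * (k + 1))) =
      (2 * N + 2).ascFactorial 4 * (2 * N + 6).ascFactorial (2 * k) := by
    have := Nat.choose_add_two_mul_mul_doubleFactorial (2 * N + 1) (k + 2)
    rw [Nat.ascFactorial_mul_ascFactorial, show 4 + 2 * k = 2 * (k + 2) by ring, ← this,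
      Nat.factorial_succ, Nat.factorial_succ]
    simp only [c, show 2 * (N + 1) + 2 * (k + 2) - 1 = 2 * N + 1 + 2 * (k + 2) by omega,
      show 2 * (N + 1) - 1 = 2 * N + 1 by omega]
    ring
  have head : (2 * N + 2).ascFactorial 4 ≤ 144 * (N + 1) ^ 2 * ((k + 2) * (k + 1)) := by
    simp only [Nat.ascFactorial_succ, Nat.ascFactorial_zero]
    have : (N + 2) * (N + 1) ≤ (k + 2) * (k + 1) := Nat.mul_le_mul (by omega) (by omega)
    nlinarith
  have tail : (2 * N + 6).ascFactorial (2 * k) ≤ (36 * (N + 1) ^ 2) ^ k := by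
    calc (2 * N + 6).ascFactorial (2 * k) ≤ (2 * N + 5 + 2 * k) ^ (2 * k) :=
          Nat.ascFactorial_le_pow_add _ _
      _ ≤ (6 * (N + 1)) ^ (2 * k) := Nat.pow_le_pow_left (by omega) _
      _ = (36 * (N + 1) ^ 2) ^ k := by rw [pow_mul]; ring
  refine Nat.le_of_mul_le_mul_right (c := 2 ^ (k + 2) * ((k + 2) * (k + 1))) ?_ (by positivity)
  calc c * k ! * (2 ^ (k + 2) * ((k + 2) * (k + 1)))
      ≤ 144 * (N + 1) ^ 2 * ((k + 2) * (k + 1)) * (36 * (N + 1) ^ 2) ^ k :=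
        hc ▸ Nat.mul_le_mul head tail
    _ = 36 * (N + 1) ^ 2 * (18 * (N + 1) ^ 2) ^ k * (2 ^ (k + 2) * ((k + 2) * (k + 1))) := by
        rw [show 36 * (N + 1) ^ 2 = 2 * (18 * (N + 1) ^ 2) by ring, mul_pow, pow_add]
        ring

theorem Real.sum_pow_sub_div_factorial_le_exp {s : Finset ℕ} {d : ℕ} (hs : ∀ m ∈ s, d ≤ m)
    {y : ℝ} (hy : 0 ≤ y) : ∑ m ∈ s, y ^ (m - d) / (m - d)! ≤ Real.exp y := by
  rw [← sum_image (f := fun j => y ^ j / (j ! : ℝ)) (g := (· - d)) fun a ha b hb h => by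
    have := hs a ha; have := hs b hb; simp only at h; omega]
  calc _ ≤ ∑ j ∈ range ((s.image (· - d)).sup id).succ, y ^ j / j ! :=
        sum_le_sum_of_subset_of_nonneg (subset_range_sup_succ _) fun _ _ _ => by positivity
    _ ≤ Real.exp y := Real.sum_le_exp_of_nonneg hy _

theorem choose_mul_doubleFactorial_mul_pow_le {n m : ℕ} (hnm : n + 1 ≤ m) (hmn : m ≤ 2 * n)
    {x : ℝ} (hx : 0 ≤ x) :
    ((2 * n + 2 * m - 1).choose (2 * n - 1) : ℝ) * ((2 * m - 1)‼ : ℕ) * x ^ m ≤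
      36 * n ^ 2 * x ^ 2 * ((18 * n ^ 2 * x) ^ (m - 2) / (m - 2)!) := by
  have hcoeff : ((2 * n + 2 * m - 1).choose (2 * n - 1) : ℝ) * ((2 * m - 1)‼ : ℕ) ≤
      36 * n ^ 2 * (18 * n ^ 2) ^ (m - 2) / (m - 2)! := by
    rw [le_div_iff₀ (by positivity)]
    exact_mod_cast Nat.choose_mul_doubleFactorial_mul_factorial_le hnm hmn
  calc _ ≤ 36 * n ^ 2 * (18 * n ^ 2) ^ (m - 2) / (m - 2)! * x ^ m := by gcongr
    _ = _ := by
      rw [show m = m - 2 + 2 by omega, Nat.add_sub_cancel]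
      ring

theorem tail_bound_type_II_general (n : ℕ) (Δt Ws Bbar : ℝ) (hB : 0 ≤ Bbar) :
    (∑ m ∈ Finset.Icc (n + 1) (2 * n),
        (Nat.choose (2 * n + 2 * m - 1) (2 * n - 1) : ℝ) * (Δt * Ws) ^ (2 * m) *
          (((2 * m - 1)‼ : ℕ) : ℝ) * Bbar ^ m)
      ≤ 36 * Δt ^ 2 * (n * Δt) ^ 2 * Ws ^ 4 * Bbar ^ 2 *
          Real.exp (18 * n ^ 2 * Δt ^ 2 * Ws ^ 2 * Bbar) := by
  set x := (Δt * Ws) ^ 2 * Bbar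
  have hx : 0 ≤ x := by positivity
  calc _ = ∑ m ∈ Icc (n + 1) (2 * n),
        ((2 * n + 2 * m - 1).choose (2 * n - 1) : ℝ) * ((2 * m - 1)‼ : ℕ) * x ^ m := by
        refine sum_congr rfl fun m _ => ?_
        rw [mul_pow, pow_mul]
        ring
    _ ≤ ∑ m ∈ Icc (n + 1) (2 * n),
        36 * n ^ 2 * x ^ 2 * ((18 * n ^ 2 * x) ^ (m - 2) / (m - 2)!) :=
        sum_le_sum fun m hm => by
          rw [mem_Icc] at hm
          exact choose_mul_doubleFactorial_mul_pow_le hm.1 hm.2 hx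
    _ ≤ 36 * n ^ 2 * x ^ 2 * Real.exp (18 * n ^ 2 * x) := by
        rw [← mul_sum]
        gcongr
        exact Real.sum_pow_sub_div_factorial_le_exp (fun m hm => by rw [mem_Icc] at hm; omega)
          (by positivity)
    _ = _ := by simp only [x]; ring_nf

/-- Tail bound of type II: with `a = Δt‖W_s‖`, the sum
`Σ_{m=n+1}^{2n} C(2n+2m−1, 2n−1)·a^{2m}·(2m−1)!!·B̄^m` is bounded by
`36·Δt²·(nΔt)²·‖W_s‖⁴·B̄²·exp(18 n²Δt²‖W_s‖²B̄)`. -/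
theorem tail_bound_type_II (n : ℕ) (hn : 1 ≤ n) (Δt Ws Bbar : ℝ)
    (hΔt : 0 ≤ Δt) (hWs : 0 ≤ Ws) (hB : 0 ≤ Bbar) :
    (∑ m ∈ Finset.Icc (n + 1) (2 * n),
        (Nat.choose (2 * n + 2 * m - 1) (2 * n - 1) : ℝ) * (Δt * Ws) ^ (2 * m) *
          (((2 * m - 1)‼ : ℕ) : ℝ) * Bbar ^ m)
      ≤ 36 * Δt ^ 2 * (n * Δt) ^ 2 * Ws ^ 4 * Bbar ^ 2 *
          Real.exp (18 * n ^ 2 * Δt ^ 2 * Ws ^ 2 * Bbar) :=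
  tail_bound_type_II_general n Δt Ws Bbar hB
end

section
/- First-order difference of schemes, type I bound: for positive integer n and a := Δt‖W_s‖, B̄ ≥ 0, the sum Σ_{m=1}^{n} [C(2n+2m−1, 2m) − C(2n, 2m)]·a^{2m}·(2m−1)!!·B̄^m is bounded by 4nΔt²‖W_s‖²B̄·(1 + 16n²Δt²‖W_s‖²B̄)·exp(8n²Δt²‖W_s‖²B̄); in particular, with T = 2nΔt fixed it is O(Δt). -/
/-!
Pascal's rule bounds `C(2n + r, r + 1) - C(2n, r + 1)`, for `r = 2m - 1`, by
`r · C(2n + r, r) ≤ r (4n)^r / r!` (a discrete mean value theorem). Since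
`(2m-1)‼ / (2m-1)! = 1 / (2^(m-1) (m-1)!)`, the `m`-th summand is at most
`4n a² B̄ · (2m - 1) y^(m-1) / (m-1)!` with `a = Δt‖W_s‖` and `y = 8n²a²B̄`, and
`∑ (2j + 1) yʲ / j! ≤ (1 + 2y) eʸ` is read off the exponential series.
-/

open scoped Nat

open Finset

theorem Nat.choose_add_le_choose_add_mul_choose (N r k : ℕ) :
    (N + k).choose (r + 1) ≤ N.choose (r + 1) + k * (N + k).choose r := by
  induction k with
  | zero => simp
  | succ k ih =>
    have hmono : (N + k).choose r ≤ (N + k + 1).choose r := Nat.choose_le_succ ..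
    have := Nat.mul_le_mul_left k hmono
    rw [← add_assoc, Nat.choose_succ_succ', add_mul, one_mul]
    omega

theorem cast_doubleFactorial_two_mul_add_one (j : ℕ) :
    (((2 * j + 1)‼ : ℕ) : ℝ) = (2 * j + 1)! / (2 ^ j * j !) := by
  rw [eq_div_iff (by positivity), Nat.factorial_eq_mul_doubleFactorial, Nat.doubleFactorial_two_mul]
  push_cast
  ring

theorem choose_mul_doubleFactorial_le (N j : ℕ) :
    (N.choose (2 * j + 1) : ℝ) * (2 * j + 1)‼ ≤ (N : ℝ) ^ (2 * j + 1) / (2 ^ j * j !) := by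
  rw [cast_doubleFactorial_two_mul_add_one]
  calc (N.choose (2 * j + 1) : ℝ) * ((2 * j + 1)! / (2 ^ j * j !))
      ≤ (N : ℝ) ^ (2 * j + 1) / (2 * j + 1)! * ((2 * j + 1)! / (2 ^ j * j !)) := by
        gcongr
        exact_mod_cast Nat.choose_le_pow_div (2 * j + 1) N
    _ = (N : ℝ) ^ (2 * j + 1) / (2 ^ j * j !) := by field_simp

theorem sum_range_mul_pow_div_factorial_le {y : ℝ} (hy : 0 ≤ y) (n : ℕ) :
    ∑ j ∈ range n, j * y ^ j / j ! ≤ y * Real.exp y := by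
  cases n with
  | zero => simp only [range_zero, sum_empty]; positivity
  | succ n =>
    have hshift : ∑ j ∈ range (n + 1), j * y ^ j / j ! = y * ∑ j ∈ range n, y ^ j / j ! := by
      rw [sum_range_succ', mul_sum]
      simp only [CharP.cast_eq_zero, zero_mul, zero_div, add_zero]
      refine sum_congr rfl fun j _ => ?_
      rw [Nat.factorial_succ]
      push_cast
      field_simp
      ring
    rw [hshift]
    exact mul_le_mul_of_nonneg_left (Real.sum_le_exp_of_nonneg hy n) hy

theorem sum_range_two_mul_add_one_mul_pow_div_factorial_le {y : ℝ} (hy : 0 ≤ y) (n : ℕ) :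
    ∑ j ∈ range n, (2 * j + 1) * y ^ j / j ! ≤ (1 + 2 * y) * Real.exp y := by
  have hsplit : ∑ j ∈ range n, (2 * j + 1) * y ^ j / j !
      = 2 * ∑ j ∈ range n, j * y ^ j / j ! + ∑ j ∈ range n, y ^ j / j ! := by
    rw [mul_sum, ← sum_add_distrib]
    exact sum_congr rfl fun j _ => by ring
  rw [hsplit]
  linarith [sum_range_mul_pow_div_factorial_le hy n, Real.sum_le_exp_of_nonneg hy n]

theorem typeI_summand_le {n j : ℕ} (hj : j < n) (a : ℝ) {B : ℝ} (hB : 0 ≤ B) :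
    ((Nat.choose (2 * n + 2 * (j + 1) - 1) (2 * (j + 1)) : ℝ) - Nat.choose (2 * n) (2 * (j + 1))) *
        a ^ (2 * (j + 1)) * (((2 * (j + 1) - 1)‼ : ℕ) : ℝ) * B ^ (j + 1)
      ≤ 4 * n * a ^ 2 * B * ((2 * j + 1) * (8 * n ^ 2 * a ^ 2 * B) ^ j / j !) := by
  have e1 : 2 * n + 2 * (j + 1) - 1 = 2 * n + (2 * j + 1) := by omega
  have e2 : 2 * (j + 1) - 1 = 2 * j + 1 := by omega
  rw [e1, e2, pow_mul]
  set r := 2 * j + 1 with hr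
  have hdiff : (Nat.choose (2 * n + r) (2 * (j + 1)) : ℝ) - Nat.choose (2 * n) (2 * (j + 1))
      ≤ r * Nat.choose (2 * n + r) r := by
    have h := Nat.choose_add_le_choose_add_mul_choose (2 * n) r r
    rw [show r + 1 = 2 * (j + 1) by omega] at h
    have : ((2 * n + r).choose (2 * (j + 1)) : ℝ) ≤ (2 * n).choose (2 * (j + 1)) +
        (r : ℝ) * (2 * n + r).choose r := by exact_mod_cast h
    linarith
  have hbase : ((2 * n + r : ℕ) : ℝ) ≤ 4 * n := by
    have : (j : ℝ) + 1 ≤ n := by exact_mod_cast hj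
    push_cast [hr]
    linarith
  calc _ = ((Nat.choose (2 * n + r) (2 * (j + 1)) : ℝ) - Nat.choose (2 * n) (2 * (j + 1))) *
          (r‼ : ℕ) * (a ^ 2) ^ (j + 1) * B ^ (j + 1) := by ring
    _ ≤ r * Nat.choose (2 * n + r) r * (r‼ : ℕ) * (a ^ 2) ^ (j + 1) * B ^ (j + 1) := by gcongr
    _ ≤ r * ((4 * n : ℝ) ^ r / (2 ^ j * j !)) * (a ^ 2) ^ (j + 1) * B ^ (j + 1) := by
        rw [mul_assoc (r : ℝ)]
        gcongr
        exact (choose_mul_doubleFactorial_le _ j).trans (by gcongr)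
    _ = 4 * n * a ^ 2 * B * ((2 * j + 1) * (8 * n ^ 2 * a ^ 2 * B) ^ j / j !) := by
        have hpow : (4 * n : ℝ) ^ (2 * j + 1) = 4 * n * 2 ^ j * (8 * n ^ 2) ^ j := by
          rw [pow_succ, pow_mul, mul_assoc _ (2 ^ j : ℝ), ← mul_pow]
          ring
        rw [hr]
        push_cast
        rw [hpow]
        field_simp
        ring

theorem type_I_bound_general (n : ℕ) (Δt Ws Bbar : ℝ)
    (hB : 0 ≤ Bbar) :
    (∑ m ∈ Finset.Icc 1 n,
        ((Nat.choose (2 * n + 2 * m - 1) (2 * m) : ℝ) - (Nat.choose (2 * n) (2 * m) : ℝ)) *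
          (Δt * Ws) ^ (2 * m) * (((2 * m - 1)‼ : ℕ) : ℝ) * Bbar ^ m)
      ≤ 4 * n * Δt ^ 2 * Ws ^ 2 * Bbar * (1 + 16 * n ^ 2 * Δt ^ 2 * Ws ^ 2 * Bbar) *
          Real.exp (8 * n ^ 2 * Δt ^ 2 * Ws ^ 2 * Bbar) := by
  set a := Δt * Ws
  set y : ℝ := 8 * n ^ 2 * a ^ 2 * Bbar
  have hy : 0 ≤ y := by positivity
  rw [← Ico_add_one_right_eq_Icc, ← sum_Ico_add' _ 0 n 1, ← range_eq_Ico]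
  calc _ ≤ ∑ j ∈ range n, 4 * n * a ^ 2 * Bbar * ((2 * j + 1) * y ^ j / j !) :=
        sum_le_sum fun j hj => typeI_summand_le (mem_range.mp hj) a hB
    _ ≤ 4 * n * a ^ 2 * Bbar * ((1 + 2 * y) * Real.exp y) := by
        rw [← mul_sum]
        gcongr
        exact sum_range_two_mul_add_one_mul_pow_div_factorial_le hy n
    _ = _ := by
        rw [show y = 8 * n ^ 2 * Δt ^ 2 * Ws ^ 2 * Bbar by ring]
        ring

/-- First-order difference of schemes, type I bound: with `a = Δt‖W_s‖`, the sum
`Σ_{m=1}^{n} [C(2n+2m−1, 2m) − C(2n, 2m)]·a^{2m}·(2m−1)!!·B̄^m` is bounded by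
`4nΔt²‖W_s‖²B̄·(1 + 16n²Δt²‖W_s‖²B̄)·exp(8n²Δt²‖W_s‖²B̄)`. -/
theorem type_I_bound (n : ℕ) (hn : 1 ≤ n) (Δt Ws Bbar : ℝ)
    (hΔt : 0 ≤ Δt) (hWs : 0 ≤ Ws) (hB : 0 ≤ Bbar) :
    (∑ m ∈ Finset.Icc 1 n,
        ((Nat.choose (2 * n + 2 * m - 1) (2 * m) : ℝ) - (Nat.choose (2 * n) (2 * m) : ℝ)) *
          (Δt * Ws) ^ (2 * m) * (((2 * m - 1)‼ : ℕ) : ℝ) * Bbar ^ m)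
      ≤ 4 * n * Δt ^ 2 * Ws ^ 2 * Bbar * (1 + 16 * n ^ 2 * Δt ^ 2 * Ws ^ 2 * Bbar) *
          Real.exp (8 * n ^ 2 * Δt ^ 2 * Ws ^ 2 * Bbar) :=
  type_I_bound_general n Δt Ws Bbar hB
end

section
/- Discrete Gronwall-type recursion: suppose nonnegative reals E_{0,0}, E_{n+1,n}, E_{n,n} satisfy E_{0,0} = 0, E_{n+1,n} ≤ (1 + 2n·c·Δt²)·E_{n,n} + A(2nΔt)·Δt², and E_{n+1,n+1} ≤ (1 + (2n+1)·c·Δt²)·E_{n+1,n} + A((2n+1)Δt)·Δt² for all n ≥ 0, where c > 0 and A is a positive monotonically increasing function. Then E_{n,n} ≤ (A(2nΔt)/(2nΔt·c))·(exp((2nΔt)²·c) − 1)·Δt for all n ≥ 1. -/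
noncomputable def Sgr (b : ℝ) : ℕ → ℝ
  | 0 => 0
  | m + 1 => (1 + m * b) * Sgr b m + 1

lemma Sgr_nonneg (b : ℝ) (hb : 0 ≤ b) : ∀ m, 0 ≤ Sgr b m := by
  intro m
  induction m with
  | zero => simp [Sgr]
  | succ m ih =>
    have h1 : (0:ℝ) ≤ 1 + m * b := by positivity
    simp only [Sgr]
    nlinarith

lemma Sgr_le (b : ℝ) (hb : 0 < b) (M : ℕ) :
    ∀ m, m ≤ M → Sgr b m ≤ ((1 + M * b) ^ m - 1) / (M * b) := by
  intro m
  induction m with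
  | zero => intro hM; simp [Sgr]
  | succ m ih =>
    intro hm
    have hM1 : 1 ≤ M := le_trans (Nat.succ_le_succ (Nat.zero_le m)) hm
    have hd : (0:ℝ) < M * b := by
      have : (0:ℝ) < (M:ℝ) := by exact_mod_cast Nat.lt_of_lt_of_le Nat.zero_lt_one hM1
      positivity
    have h1 : m ≤ M := le_trans (Nat.le_succ m) hm
    have h1' : (m:ℝ) ≤ (M:ℝ) := by exact_mod_cast h1
    have ihm := ih h1
    have hS := Sgr_nonneg b hb.le m
    have key : ((1 + M * b) ^ (m+1) - 1) / (M * b)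
        = (1 + M * b) * (((1 + M * b) ^ m - 1) / (M * b)) + 1 := by
      field_simp
      ring
    have hfac : (0:ℝ) ≤ 1 + M * b := by positivity
    calc Sgr b (m+1) = (1 + m * b) * Sgr b m + 1 := rfl
      _ ≤ (1 + M * b) * Sgr b m + 1 := by
          nlinarith [mul_le_mul_of_nonneg_right (mul_le_mul_of_nonneg_right h1' hb.le) hS]
      _ ≤ (1 + M * b) * (((1 + M * b) ^ m - 1) / (M * b)) + 1 := by
          have := mul_le_mul_of_nonneg_left ihm hfac
          linarith
      _ = ((1 + M * b) ^ (m+1) - 1) / (M * b) := key.symm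

/-- Discrete Gronwall-type recursion: if nonnegative errors satisfy `E_{0,0} = 0`,
`E_{n+1,n} ≤ (1 + 2n·c·Δt²)·E_{n,n} + A(2nΔt)·Δt²` and
`E_{n+1,n+1} ≤ (1 + (2n+1)·c·Δt²)·E_{n+1,n} + A((2n+1)Δt)·Δt²` for all `n ≥ 0`,
with `c > 0` and `A` positive and monotonically increasing, then
`E_{n,n} ≤ (A(2nΔt)/(2nΔt·c))·(exp((2nΔt)²·c) − 1)·Δt` for all `n ≥ 1`. -/
theorem discrete_gronwall_recursion (Δt c : ℝ) (hΔt : 0 < Δt) (hc : 0 < c)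
    (A : ℝ → ℝ) (hApos : ∀ s, 0 < A s) (hAmono : Monotone A)
    (E : ℕ → ℕ → ℝ) (hEnonneg : ∀ n m, 0 ≤ E n m) (hE0 : E 0 0 = 0)
    (hstep1 : ∀ n : ℕ,
      E (n + 1) n ≤ (1 + 2 * n * c * Δt ^ 2) * E n n + A (2 * n * Δt) * Δt ^ 2)
    (hstep2 : ∀ n : ℕ,
      E (n + 1) (n + 1) ≤ (1 + (2 * n + 1) * c * Δt ^ 2) * E (n + 1) n +
        A ((2 * n + 1) * Δt) * Δt ^ 2) :
    ∀ n : ℕ, 1 ≤ n →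
      E n n ≤ A (2 * n * Δt) / (2 * n * Δt * c) *
        (Real.exp ((2 * n * Δt) ^ 2 * c) - 1) * Δt := by
  set b : ℝ := c * Δt ^ 2 with hb
  have hbpos : 0 < b := by positivity
  have hSnn : ∀ m, 0 ≤ Sgr b m := Sgr_nonneg b hbpos.le
  have hΔt2 : (0:ℝ) < Δt ^ 2 := by positivity
  -- main induction
  have main : ∀ n : ℕ, E n n ≤ A (2 * n * Δt) * Δt ^ 2 * Sgr b (2 * n) ∧
      E (n + 1) n ≤ A ((2 * n + 1) * Δt) * Δt ^ 2 * Sgr b (2 * n + 1) := by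
    intro n
    induction n with
    | zero =>
      constructor
      · simp [hE0, Sgr]
      · have h := hstep1 0
        have hA : A (2 * (0:ℕ) * Δt) ≤ A ((2 * (0:ℕ) + 1) * Δt) := by
          apply hAmono; push_cast; nlinarith
        have hS1 : Sgr b (2 * 0 + 1) = 1 := by norm_num [Sgr]
        simp only [hE0] at h
        push_cast at h hA ⊢
        rw [hS1]
        nlinarith
    | succ n ih =>
      obtain ⟨ih1, ih2⟩ := ih
      have hA12 : A ((2 * (n:ℝ) + 1) * Δt) ≤ A (2 * ((n:ℝ) + 1) * Δt) := by
        apply hAmono; nlinarith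
      have hfac : (0:ℝ) ≤ 1 + (2 * (n:ℝ) + 1) * c * Δt ^ 2 := by positivity
      have hApos1 : 0 < A ((2 * (n:ℝ) + 1) * Δt) := hApos _
      have hSe : Sgr b (2 * (n+1)) = (1 + (2 * (n:ℝ) + 1) * b) * Sgr b (2 * n + 1) + 1 := by
        have : 2 * (n + 1) = (2 * n + 1) + 1 := by ring
        rw [this]
        simp only [Sgr]
        push_cast
        ring
      have part1 : E (n+1) (n+1) ≤ A (2 * ((n:ℝ)+1) * Δt) * Δt ^ 2 * Sgr b (2 * (n+1)) := by
        have h := hstep2 n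
        have hSnn1 := hSnn (2 * n + 1)
        calc E (n+1) (n+1)
            ≤ (1 + (2 * (n:ℝ) + 1) * c * Δt ^ 2) * E (n+1) n
              + A ((2 * (n:ℝ) + 1) * Δt) * Δt ^ 2 := by push_cast at h ⊢; linarith
          _ ≤ (1 + (2 * (n:ℝ) + 1) * c * Δt ^ 2) *
              (A ((2 * (n:ℝ) + 1) * Δt) * Δt ^ 2 * Sgr b (2 * n + 1))
              + A ((2 * (n:ℝ) + 1) * Δt) * Δt ^ 2 := by
                have h2 : E (n+1) n ≤ A ((2 * (n:ℝ) + 1) * Δt) * Δt ^ 2 * Sgr b (2 * n + 1) := by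
                  push_cast at ih2 ⊢; linarith
                nlinarith [mul_le_mul_of_nonneg_left h2 hfac]
          _ ≤ (1 + (2 * (n:ℝ) + 1) * c * Δt ^ 2) *
              (A (2 * ((n:ℝ)+1) * Δt) * Δt ^ 2 * Sgr b (2 * n + 1))
              + A (2 * ((n:ℝ)+1) * Δt) * Δt ^ 2 := by
                have h3 : A ((2 * (n:ℝ) + 1) * Δt) * Δt ^ 2 * Sgr b (2 * n + 1)
                    ≤ A (2 * ((n:ℝ)+1) * Δt) * Δt ^ 2 * Sgr b (2 * n + 1) := by
                  apply mul_le_mul_of_nonneg_right _ hSnn1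
                  exact mul_le_mul_of_nonneg_right hA12 hΔt2.le
                nlinarith [mul_le_mul_of_nonneg_left h3 hfac]
          _ = A (2 * ((n:ℝ)+1) * Δt) * Δt ^ 2 * Sgr b (2 * (n+1)) := by
                rw [hSe, hb]; ring
      refine ⟨by push_cast; push_cast at part1; exact part1, ?_⟩
      -- part 2 for n+1
      have hA23 : A (2 * ((n:ℝ)+1) * Δt) ≤ A ((2 * ((n:ℝ)+1) + 1) * Δt) := by
        apply hAmono; nlinarith
      have hfac2 : (0:ℝ) ≤ 1 + 2 * ((n:ℝ)+1) * c * Δt ^ 2 := by positivity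
      have hSe2 : Sgr b (2 * (n+1) + 1) = (1 + (2 * ((n:ℝ) + 1)) * b) * Sgr b (2 * (n+1)) + 1 := by
        simp only [Sgr]
        push_cast
        ring
      have h := hstep1 (n+1)
      have hSnn2 := hSnn (2 * (n+1))
      push_cast
      calc E (n+1+1) (n+1)
          ≤ (1 + 2 * ((n:ℝ)+1) * c * Δt ^ 2) * E (n+1) (n+1)
            + A (2 * ((n:ℝ)+1) * Δt) * Δt ^ 2 := by push_cast at h ⊢; linarith
        _ ≤ (1 + 2 * ((n:ℝ)+1) * c * Δt ^ 2) *
            (A (2 * ((n:ℝ)+1) * Δt) * Δt ^ 2 * Sgr b (2 * (n+1)))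
            + A (2 * ((n:ℝ)+1) * Δt) * Δt ^ 2 := by
              nlinarith [mul_le_mul_of_nonneg_left part1 hfac2]
        _ ≤ (1 + 2 * ((n:ℝ)+1) * c * Δt ^ 2) *
            (A ((2 * ((n:ℝ)+1) + 1) * Δt) * Δt ^ 2 * Sgr b (2 * (n+1)))
            + A ((2 * ((n:ℝ)+1) + 1) * Δt) * Δt ^ 2 := by
              have h3 : A (2 * ((n:ℝ)+1) * Δt) * Δt ^ 2 * Sgr b (2 * (n+1))
                  ≤ A ((2 * ((n:ℝ)+1) + 1) * Δt) * Δt ^ 2 * Sgr b (2 * (n+1)) := by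
                apply mul_le_mul_of_nonneg_right _ hSnn2
                exact mul_le_mul_of_nonneg_right hA23 hΔt2.le
              nlinarith [mul_le_mul_of_nonneg_left h3 hfac2]
        _ = A ((2 * ((n:ℝ)+1) + 1) * Δt) * Δt ^ 2 * Sgr b (2 * (n+1) + 1) := by
              rw [hSe2, hb]; ring
  -- conclude
  intro n hn
  have hnR : (1:ℝ) ≤ (n:ℝ) := by exact_mod_cast hn
  have hM : (0:ℝ) < 2 * n := by linarith
  have hMb : (0:ℝ) < (2 * n : ℕ) * b := by
    have : ((2 * n : ℕ) : ℝ) = 2 * (n:ℝ) := by push_cast; ring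
    rw [this]; positivity
  have hbound := Sgr_le b hbpos (2 * n) (2 * n) le_rfl
  have hpow : (1 + ((2 * n : ℕ) : ℝ) * b) ^ (2 * n)
      ≤ Real.exp ((2 * (n:ℝ) * Δt) ^ 2 * c) := by
    have h1 : (1 + ((2 * n : ℕ) : ℝ) * b) ^ (2 * n)
        ≤ (Real.exp (((2 * n : ℕ) : ℝ) * b)) ^ (2 * n) := by
      apply pow_le_pow_left₀
      · have : (0:ℝ) ≤ ((2 * n : ℕ) : ℝ) * b := by positivity
        linarith
      · linarith [Real.add_one_le_exp (((2 * n : ℕ) : ℝ) * b)]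
    have h2 : (Real.exp (((2 * n : ℕ) : ℝ) * b)) ^ (2 * n)
        = Real.exp ((2 * n : ℕ) * (((2 * n : ℕ) : ℝ) * b)) := by
      rw [← Real.exp_nat_mul]
    rw [h2] at h1
    have h3 : ((2 * n : ℕ) : ℝ) * (((2 * n : ℕ) : ℝ) * b) = (2 * (n:ℝ) * Δt) ^ 2 * c := by
      push_cast; rw [hb]; ring
    rw [h3] at h1
    exact h1
  have hmain := (main n).1
  have hexp1 : (1:ℝ) ≤ Real.exp ((2 * (n:ℝ) * Δt) ^ 2 * c) := by
    rw [← Real.exp_zero]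
    apply Real.exp_le_exp.mpr
    positivity
  have hS2 : Sgr b (2 * n) ≤ (Real.exp ((2 * (n:ℝ) * Δt) ^ 2 * c) - 1) / ((2 * n : ℕ) * b) := by
    refine le_trans hbound ?_
    gcongr
  have hAnn : (0:ℝ) ≤ A (2 * (n:ℝ) * Δt) * Δt ^ 2 := by
    have := hApos (2 * (n:ℝ) * Δt); positivity
  have hfin : E n n ≤ A (2 * (n:ℝ) * Δt) * Δt ^ 2 *
      ((Real.exp ((2 * (n:ℝ) * Δt) ^ 2 * c) - 1) / ((2 * n : ℕ) * b)) := by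
    calc E n n ≤ A (2 * (n:ℝ) * Δt) * Δt ^ 2 * Sgr b (2 * n) := hmain
      _ ≤ _ := mul_le_mul_of_nonneg_left hS2 hAnn
  have heq : A (2 * (n:ℝ) * Δt) * Δt ^ 2 *
      ((Real.exp ((2 * (n:ℝ) * Δt) ^ 2 * c) - 1) / ((2 * n : ℕ) * b))
      = A (2 * (n:ℝ) * Δt) / (2 * (n:ℝ) * Δt * c) *
        (Real.exp ((2 * (n:ℝ) * Δt) ^ 2 * c) - 1) * Δt := by
    rw [hb]
    push_cast
    have hne : (n:ℝ) ≠ 0 := by linarith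
    field_simp
  rw [heq] at hfin
  exact hfin
end
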